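/- For odd l, set ω_l = exp(2πi/l), A = diag(λ_1,...,λ_l) with λ_k = ω̄_l^{M·k(k+1)/2} for a fixed nonzero integer M, B = diag(ω̄_l, ω̄_l², ..., ω̄_l^l), and S the l×l cyclic shift. Then: (i) A S A^{-1} S^{-1} = B^M; (ii) ‖B S B^{-1} S^{-1} − 1_l‖ = |ω̄_l − 1| → 0 as l → ∞ through odd values; (iii) AB = BA. -/

import Mathlib

open Complex Matrix Filter

/-- `ω̄_l = exp(−2πi/l)`. -/
noncomputable def omgb (l : ℕ) : ℂ := Complex.exp (-(2 * Real.pi * Complex.I) / l)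

/-- The `l×l` cyclic shift matrix `S`, with `S e_k = e_{k+1}` (indices mod `l`). -/
def Vshift (l : ℕ) : Matrix (Fin l) (Fin l) ℂ :=
  Matrix.of fun i j => if (i : ℕ) = ((j : ℕ) + 1) % l then 1 else 0

/-- `A = diag(λ₁,…,λ_l)` with `λ_k = ω̄_l^{M·k(k+1)/2}` (here `k` runs through `1,…,l`). -/
noncomputable def Amat (l : ℕ) (M : ℤ) : Matrix (Fin l) (Fin l) ℂ :=
  Matrix.diagonal fun k => omgb l ^ (M * ((((k : ℕ) + 1) * ((k : ℕ) + 2) / 2 : ℕ) : ℤ))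

/-- `B = diag(ω̄_l, ω̄_l², …, ω̄_l^l)`. -/
noncomputable def Bmat (l : ℕ) : Matrix (Fin l) (Fin l) ℂ :=
  Matrix.diagonal fun k => omgb l ^ ((k : ℕ) + 1)

/-- `M ^ k` for an integer exponent `k`, negative powers via the matrix inverse. -/
noncomputable def zpowMat {n : ℕ} (M : Matrix (Fin n) (Fin n) ℂ) (k : ℤ) :
    Matrix (Fin n) (Fin n) ℂ :=
  if 0 ≤ k then M ^ k.toNat else M⁻¹ ^ (-k).toNat

/-- The operator norm on `l×l` complex matrices. -/
noncomputable def opNorm {n : ℕ} (M : Matrix (Fin n) (Fin n) ℂ) : ℝ :=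
  ‖Matrix.toEuclideanCLM (n := Fin n) (𝕜 := ℂ) M‖

/-! Conjugating the cyclic shift `S` by an invertible diagonal matrix `D = diag(d_k)` gives
`D S D⁻¹ S⁻¹ = diag(d_k / d_{k-1})`, indices mod `l`. For `B` every quotient is `ω̄_l`, since
`ω̄_l^l = 1` also takes care of the wrap-around. For `A` the quotients are `ω̄_l^{Mk}`, the
entries of `B^M`: away from `k = 1` this is `T(k) - T(k-1) = k` for the triangular numbers `T`,
and at the wrap-around `λ_1 / λ_l = ω̄_l^{M(1 - l(l+1)/2)} = ω̄_l^M` because `l ∣ l(l+1)/2` for odd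
`l`. -/

open scoped Topology

lemma omgb_ne_zero (l : ℕ) : omgb l ≠ 0 := Complex.exp_ne_zero _

lemma omgb_pow_self {l : ℕ} (hl : l ≠ 0) : omgb l ^ l = 1 := by
  rw [omgb, ← Complex.exp_nat_mul, mul_div_cancel₀ _ (Nat.cast_ne_zero.mpr hl), Complex.exp_neg,
    Complex.exp_two_pi_mul_I, inv_one]

lemma tendsto_omgb_atTop : Tendsto omgb atTop (𝓝 1) := by
  have h := (continuous_exp.tendsto 0).comp
    (tendsto_const_div_atTop_nhds_zero_nat (-(2 * Real.pi * I)))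
  rwa [exp_zero] at h

lemma zpow_eq_zpow_of_modEq {G₀ : Type*} [GroupWithZero G₀] {ζ : G₀} {l : ℕ} (hζ : ζ ^ l = 1)
    {a b : ℤ} (h : a ≡ b [ZMOD l]) : ζ ^ a = ζ ^ b := by
  rcases eq_or_ne l 0 with rfl | hl
  · rw [show a = b by simpa [Int.ModEq] using h]
  have hζ0 : ζ ≠ 0 := by
    rintro rfl
    simp [zero_pow hl] at hζ
  obtain ⟨k, hk⟩ := h.dvd
  rw [show b = a + l * k by omega, zpow_add₀ hζ0, _root_.zpow_mul, zpow_natCast, hζ,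
    _root_.one_zpow, mul_one]

lemma Matrix.inv_diagonal_of_ne_zero {n K : Type*} [Fintype n] [DecidableEq n] [Field K]
    (a : n → K) (ha : ∀ i, a i ≠ 0) : (diagonal a)⁻¹ = diagonal a⁻¹ :=
  inv_eq_left_inv <| by simp [diagonal_mul_diagonal, ha]

lemma zpowMat_diagonal {n : ℕ} (b : Fin n → ℂ) (hb : ∀ i, b i ≠ 0) (k : ℤ) :
    zpowMat (diagonal b) k = diagonal fun i => b i ^ k := by
  unfold zpowMat
  split_ifs with hk
  · rw [diagonal_pow]
    congr 1
    funext i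
    rw [Pi.pow_apply, ← zpow_natCast, Int.toNat_of_nonneg hk]
  · rw [inv_diagonal_of_ne_zero b hb, diagonal_pow]
    congr 1
    funext i
    rw [Pi.pow_apply, Pi.inv_apply, inv_pow, ← zpow_natCast, Int.toNat_of_nonneg (by omega),
      ← _root_.zpow_neg, neg_neg]

section Vshift

variable (l : ℕ) [NeZero l]

lemma Vshift_apply (i j : Fin l) : Vshift l i j = if j = i - 1 then 1 else 0 := by
  have hj : ((j : ℕ) + 1) % l = ((j + 1 : Fin l) : ℕ) := by
    simp [Fin.val_add, Nat.add_mod]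
  simp only [Vshift, of_apply, hj, Fin.val_inj, eq_sub_iff_add_eq, eq_comm]

lemma Vshift_mul_transpose : Vshift l * (Vshift l)ᵀ = 1 := by
  ext i k
  simp [mul_apply, Vshift_apply, one_apply, eq_comm]

lemma Vshift_mul_inv : Vshift l * (Vshift l)⁻¹ = 1 := by
  rw [inv_eq_right_inv (Vshift_mul_transpose l), Vshift_mul_transpose]

lemma Vshift_mul_diagonal (a : Fin l → ℂ) :
    Vshift l * diagonal a = diagonal (fun i => a (i - 1)) * Vshift l := by
  ext i k
  simp only [mul_diagonal, diagonal_mul, Vshift_apply]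
  split_ifs with h
  · rw [h, one_mul, mul_one]
  · simp

lemma diagonal_commutator_Vshift (a : Fin l → ℂ) (ha : ∀ i, a i ≠ 0) :
    diagonal a * Vshift l * (diagonal a)⁻¹ * (Vshift l)⁻¹ =
      diagonal fun i => a i / a (i - 1) := by
  rw [inv_diagonal_of_ne_zero a ha, mul_assoc (diagonal a), Vshift_mul_diagonal, ← mul_assoc,
    mul_assoc _ (Vshift l), Vshift_mul_inv, mul_one, diagonal_mul_diagonal]
  rfl

end Vshift

lemma triangle_succ (v : ℕ) : (v + 1) * (v + 2) / 2 = v * (v + 1) / 2 + (v + 1) := by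
  have h : (v + 1) * (v + 2) = v * (v + 1) + 2 * (v + 1) := by ring
  omega

lemma triangle_sub_triangle_sub_one_modEq {l : ℕ} [NeZero l] (hl : Odd l) (i : Fin l) :
    ((((i : ℕ) + 1) * ((i : ℕ) + 2) / 2 : ℕ) : ℤ) -
        ((((i - 1 : Fin l) : ℕ) + 1) * (((i - 1 : Fin l) : ℕ) + 2) / 2 : ℕ) ≡
      (i : ℕ) + 1 [ZMOD l] := by
  obtain ⟨k, rfl⟩ := hl
  rw [Fin.coe_sub_one]
  split_ifs with h
  · have hT : (2 * k + 1) * (2 * k + 2) / 2 = (2 * k + 1) * (k + 1) := by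
      rw [show (2 * k + 1) * (2 * k + 2) = 2 * ((2 * k + 1) * (k + 1)) by ring]
      omega
    refine Int.modEq_iff_dvd.mpr ⟨k + 1, ?_⟩
    simp only [h, Fin.val_zero, hT]
    push_cast
    ring
  · have hi : 1 ≤ (i : ℕ) := Nat.one_le_iff_ne_zero.mpr (Fin.val_ne_zero_iff.mpr h)
    rw [show (i : ℕ) - 1 + 1 = i by omega, show (i : ℕ) - 1 + 2 = i + 1 by omega,
      triangle_succ]
    push_cast
    rw [add_sub_cancel_left]

lemma Amat_commutator_Vshift (M : ℤ) {l : ℕ} (hl : Odd l) :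
    Amat l M * Vshift l * (Amat l M)⁻¹ * (Vshift l)⁻¹ = zpowMat (Bmat l) M := by
  have : NeZero l := ⟨hl.pos.ne'⟩
  rw [Amat, diagonal_commutator_Vshift l _ fun _ => zpow_ne_zero _ (omgb_ne_zero l), Bmat,
    zpowMat_diagonal _ fun _ => pow_ne_zero _ (omgb_ne_zero l)]
  congr 1
  funext i
  rw [← zpow_sub₀ (omgb_ne_zero l), ← zpow_natCast, ← _root_.zpow_mul, ← mul_sub]
  refine zpow_eq_zpow_of_modEq (omgb_pow_self (NeZero.ne l)) ?_
  rw [mul_comm (_ : ℤ) M]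
  exact_mod_cast (triangle_sub_triangle_sub_one_modEq hl i).mul_left M

lemma Bmat_commutator_Vshift (l : ℕ) [NeZero l] :
    Bmat l * Vshift l * (Bmat l)⁻¹ * (Vshift l)⁻¹ = omgb l • 1 := by
  rw [Bmat, diagonal_commutator_Vshift l _ fun _ => pow_ne_zero _ (omgb_ne_zero l),
    ← diagonal_one, ← diagonal_smul]
  congr 1
  funext i
  obtain ⟨n, rfl⟩ := Nat.exists_eq_succ_of_ne_zero (NeZero.ne l)
  rw [Fin.coe_sub_one]
  split_ifs with h
  · simp [h, omgb_pow_self (Nat.succ_ne_zero n)]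
  · have hi : 1 ≤ (i : ℕ) := Nat.one_le_iff_ne_zero.mpr (Fin.val_ne_zero_iff.mpr h)
    rw [show (i : ℕ) - 1 + 1 = i by omega, pow_succ,
      mul_div_cancel_left₀ _ (pow_ne_zero _ (omgb_ne_zero _))]
    simp

lemma opNorm_smul_one (l : ℕ) [NeZero l] (c : ℂ) :
    opNorm (c • (1 : Matrix (Fin l) (Fin l) ℂ)) = ‖c‖ := by
  rw [opNorm, map_smul, map_one, norm_smul, norm_one, mul_one]

lemma opNorm_Bmat_commutator_Vshift_sub_one (l : ℕ) [NeZero l] :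
    opNorm (Bmat l * Vshift l * (Bmat l)⁻¹ * (Vshift l)⁻¹ - 1) = ‖omgb l - 1‖ := by
  rw [Bmat_commutator_Vshift, ← opNorm_smul_one l, sub_smul, one_smul]

theorem stmt13_general (M : ℤ) :
    (∀ l : ℕ, Odd l →
      Amat l M * Vshift l * (Amat l M)⁻¹ * (Vshift l)⁻¹ = zpowMat (Bmat l) M) ∧
    (∀ l : ℕ, Odd l →
      opNorm (Bmat l * Vshift l * (Bmat l)⁻¹ * (Vshift l)⁻¹ - 1) =
        ‖omgb l - 1‖) ∧
    Filter.Tendsto (fun j : ℕ =>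
        opNorm (Bmat (2 * j + 1) * Vshift (2 * j + 1) * (Bmat (2 * j + 1))⁻¹ *
          (Vshift (2 * j + 1))⁻¹ - 1))
      Filter.atTop (nhds 0) ∧
    (∀ l : ℕ, Odd l → Amat l M * Bmat l = Bmat l * Amat l M) := by
  have hodd : Tendsto (fun j : ℕ => 2 * j + 1) atTop atTop :=
    tendsto_atTop_atTop.mpr fun b => ⟨b, fun a ha => by omega⟩
  refine ⟨fun l hl => Amat_commutator_Vshift M hl, fun l hl => ?_, ?_, fun l _ => ?_⟩
  · have : NeZero l := ⟨hl.pos.ne'⟩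
    exact opNorm_Bmat_commutator_Vshift_sub_one l
  · simp only [opNorm_Bmat_commutator_Vshift_sub_one]
    exact (tendsto_iff_norm_sub_tendsto_zero.mp tendsto_omgb_atTop).comp hodd
  · simp only [Amat, Bmat, diagonal_mul_diagonal, mul_comm]

/-- For odd `l` and a fixed nonzero integer `M`:
(i) `A S A⁻¹ S⁻¹ = B^M`;
(ii) `‖B S B⁻¹ S⁻¹ − 1‖ = |ω̄_l − 1|`, which tends to `0` as `l → ∞` through odd values;
(iii) `AB = BA`. -/
theorem stmt13 (M : ℤ) (hM : M ≠ 0) :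
    (∀ l : ℕ, Odd l →
      Amat l M * Vshift l * (Amat l M)⁻¹ * (Vshift l)⁻¹ = zpowMat (Bmat l) M) ∧
    (∀ l : ℕ, Odd l →
      opNorm (Bmat l * Vshift l * (Bmat l)⁻¹ * (Vshift l)⁻¹ - 1) =
        ‖omgb l - 1‖) ∧
    Filter.Tendsto (fun j : ℕ =>
        opNorm (Bmat (2 * j + 1) * Vshift (2 * j + 1) * (Bmat (2 * j + 1))⁻¹ *
          (Vshift (2 * j + 1))⁻¹ - 1))
      Filter.atTop (nhds 0) ∧
    (∀ l : ℕ, Odd l → Amat l M * Bmat l = Bmat l * Amat l M) :=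
  stmt13_general M
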